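/- arXiv:nlin/0306058 — 2 statements merged into one kernel-verified Lean document; each statement's English description precedes it below -/
import Mathlib

section
/- Let s : ℝ² → ℝ be continuously differentiable. Then there exists ρ₀ > 0 such that for all radii 0 < ρ₁ < ρ₂ ≤ ρ₀, the map Ψ is injective on the slit annulus V_* = {H ∈ P : ρ₁ < |H| < ρ₂}. -/
open Real Filter Topology MeasureTheory

/-- The Euclidean norm `|H| = √(H₁² + H₂²)` on `ℝ²`. -/
noncomputable def nrm (H : ℝ × ℝ) : ℝ := Real.sqrt (H.1 ^ 2 + H.2 ^ 2)

/-- The slit plane `P = ℝ² \ {(t,0) : t ≥ 0}`. -/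
def slitP : Set (ℝ × ℝ) := {H | ¬ (0 ≤ H.1 ∧ H.2 = 0)}

/-- The branch of the polar angle with values in `(0, 2π)` on the slit plane:
`argS (r cos θ, r sin θ) = θ` for `r > 0`, `θ ∈ (0, 2π)`. -/
noncomputable def argS (H : ℝ × ℝ) : ℝ :=
  Real.pi + Complex.arg (-(H.1 + H.2 * Complex.I))

/-- The partial derivative with respect to the first variable. -/
noncomputable def pd₁ (f : ℝ × ℝ → ℝ) (H : ℝ × ℝ) : ℝ := fderiv ℝ f H (1, 0)

/-- The partial derivative with respect to the second variable. -/
noncomputable def pd₂ (f : ℝ × ℝ → ℝ) (H : ℝ × ℝ) : ℝ := fderiv ℝ f H (0, 1)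

/-- The action function `ψ(H) = (1/(2π))(H₂ ln|H| + H₁ arg H) + s(H)`. -/
noncomputable def ψ (s : ℝ × ℝ → ℝ) (H : ℝ × ℝ) : ℝ :=
  (1 / (2 * Real.pi)) * (H.2 * Real.log (nrm H) + H.1 * argS H) + s H

/-- The action map `Ψ(H) = (H₁, ψ(H))`. -/
noncomputable def ΨM (s : ℝ × ℝ → ℝ) (H : ℝ × ℝ) : ℝ × ℝ := (H.1, ψ s H)

lemma abs_eq_nrm (x u : ℝ) : ‖(-(↑x + ↑u * Complex.I) : ℂ)‖ = nrm (x, u) := by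
  rw [norm_neg, Complex.norm_def, Complex.normSq_apply, nrm]
  simp
  ring_nf

lemma hasDerivAt_slice (s : ℝ × ℝ → ℝ) (hs : ContDiff ℝ 1 s) (x t : ℝ)
    (h : x < 0 ∨ t ≠ 0) :
    HasDerivAt (fun u => ψ s (x, u))
      ((Real.log (nrm (x, t)) + 1) / (2 * Real.pi) + fderiv ℝ s (x, t) (0, 1)) t := by
  have hq : x ^ 2 + t ^ 2 ≠ 0 := by
    rcases h with h | h
    · nlinarith [sq_nonneg t]
    · positivity
  have hq2 : t ^ 2 + x ^ 2 ≠ 0 := by rw [add_comm]; exact hq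
  have hw : HasDerivAt (fun u : ℝ => -((x : ℂ) + (u : ℂ) * Complex.I)) (-Complex.I) t := by
    have h1 : HasDerivAt (fun u : ℝ => (u : ℂ)) 1 t := by
      simpa using (hasDerivAt_id t).ofReal_comp
    exact (((h1.mul_const Complex.I).const_add (x : ℂ)).neg).congr_deriv (by simp)
  have hmem : -((x : ℂ) + (t : ℂ) * Complex.I) ∈ Complex.slitPlane := by
    rw [Complex.mem_slitPlane_iff]
    rcases h with h | h
    · left; simp; linarith
    · right; simpa using h
  have hlog : HasDerivAt (fun u : ℝ => Complex.log (-((x : ℂ) + (u : ℂ) * Complex.I)))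
      ((-Complex.I) • (-((x : ℂ) + (t : ℂ) * Complex.I))⁻¹) t :=
    by
    have := (Complex.hasDerivAt_log hmem).scomp t hw
    exact this
  set D : ℂ := (-Complex.I) • (-((x : ℂ) + (t : ℂ) * Complex.I))⁻¹ with hD
  have hDre : D.re = t / (x ^ 2 + t ^ 2) := by
    rw [hD]
    simp [Complex.smul_re, Complex.inv_re, Complex.inv_im, Complex.normSq_apply]
    field_simp
  have hDim : D.im = x / (x ^ 2 + t ^ 2) := by
    rw [hD]
    simp [Complex.smul_im, Complex.inv_re, Complex.inv_im, Complex.normSq_apply]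
    field_simp
  have hre : HasDerivAt (fun u : ℝ => (Complex.log (-((x : ℂ) + (u : ℂ) * Complex.I))).re)
      (t / (x ^ 2 + t ^ 2)) t := by
    have := (Complex.reCLM.hasFDerivAt (x := Complex.log (-((x : ℂ) + (t : ℂ) * Complex.I)))).comp_hasDerivAt t hlog
    simpa [hDre, Function.comp_def] using this
  have him : HasDerivAt (fun u : ℝ => (Complex.log (-((x : ℂ) + (u : ℂ) * Complex.I))).im)
      (x / (x ^ 2 + t ^ 2)) t := by
    have := (Complex.imCLM.hasFDerivAt (x := Complex.log (-((x : ℂ) + (t : ℂ) * Complex.I)))).comp_hasDerivAt t hlog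
    simpa [hDim, Function.comp_def] using this
  have hsd : HasDerivAt (fun u : ℝ => s (x, u)) (fderiv ℝ s (x, t) (0, 1)) t := by
    have hdiff := (hs.differentiable one_ne_zero (x, t)).hasFDerivAt
    have hcurve : HasDerivAt (fun u : ℝ => ((x, u) : ℝ × ℝ)) ((0 : ℝ), (1 : ℝ)) t :=
      (hasDerivAt_const t x).prodMk (hasDerivAt_id t)
    exact hdiff.comp_hasDerivAt t hcurve
  have hmain : HasDerivAt (fun u : ℝ => (1 / (2 * Real.pi)) *
      (u * (Complex.log (-((x : ℂ) + (u : ℂ) * Complex.I))).re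
        + x * (Real.pi + (Complex.log (-((x : ℂ) + (u : ℂ) * Complex.I))).im)) + s (x, u))
      ((1 / (2 * Real.pi)) * ((1 * (Complex.log (-((x : ℂ) + (t : ℂ) * Complex.I))).re
        + t * (t / (x ^ 2 + t ^ 2))) + x * (x / (x ^ 2 + t ^ 2))) + fderiv ℝ s (x, t) (0, 1)) t :=
    ((((hasDerivAt_id t).mul hre).add ((him.const_add Real.pi).const_mul x)).const_mul
      (1 / (2 * Real.pi))).add hsd
  have hfun : (fun u : ℝ => ψ s (x, u)) = (fun u : ℝ => (1 / (2 * Real.pi)) *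
      (u * (Complex.log (-((x : ℂ) + (u : ℂ) * Complex.I))).re
        + x * (Real.pi + (Complex.log (-((x : ℂ) + (u : ℂ) * Complex.I))).im)) + s (x, u)) := by
    funext u
    simp only [ψ, argS]
    rw [Complex.log_re, Complex.log_im, abs_eq_nrm]
  rw [hfun]
  convert hmain using 1
  rw [Complex.log_re, abs_eq_nrm]
  have hpi : (2 * Real.pi) ≠ 0 := by positivity
  field_simp
  ring

lemma cont_nrm_slice (x : ℝ) : Continuous (fun u : ℝ => nrm (x, u)) := by
  unfold nrm
  continuity

lemma tendsto_s_slice {s : ℝ × ℝ → ℝ} (hc : Continuous s) (x : ℝ) (l : Filter ℝ)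
    (hl : l ≤ 𝓝 0) : Tendsto (fun u : ℝ => s (x, u)) l (𝓝 (s (x, 0))) := by
  have : Continuous (fun u : ℝ => s (x, u)) := hc.comp (continuous_const.prodMk continuous_id)
  exact (this.tendsto 0).mono_left hl

lemma tendsto_log_slice {x : ℝ} (hx : 0 < x) :
    Tendsto (fun u : ℝ => u * Real.log (nrm (x, u))) (𝓝 (0:ℝ)) (𝓝 0) := by
  have hn : nrm (x, 0) ≠ 0 := by
    unfold nrm; simp; positivity
  have h1 : Tendsto (fun u : ℝ => u * Real.log (nrm (x, u))) (𝓝 (0:ℝ))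
      (𝓝 (0 * Real.log (nrm (x, 0)))) :=
    (continuousAt_id.mul (((cont_nrm_slice x).continuousAt).log hn))
  simpa using h1

lemma tendsto_log_slice_zero_right :
    Tendsto (fun u : ℝ => u * Real.log (nrm (0, u))) (𝓝[>] (0:ℝ)) (𝓝 0) := by
  have h := tendsto_log_mul_rpow_nhdsGT_zero one_pos
  simp only [Real.rpow_one] at h
  refine h.congr' ?_
  filter_upwards [self_mem_nhdsWithin] with u hu
  have : nrm (0, u) = u := by
    unfold nrm
    simp [Real.sqrt_sq_eq_abs, abs_of_pos (Set.mem_Ioi.mp hu)]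
  rw [this, mul_comm]

lemma tendsto_log_slice_zero_left :
    Tendsto (fun u : ℝ => u * Real.log (nrm (0, u))) (𝓝[<] (0:ℝ)) (𝓝 0) := by
  have h := tendsto_log_mul_self_nhdsLT_zero
  refine h.congr' ?_
  filter_upwards [self_mem_nhdsWithin] with u hu
  have hu' : u < 0 := hu
  have : nrm (0, u) = -u := by
    unfold nrm
    simp [Real.sqrt_sq_eq_abs, abs_of_neg hu']
  rw [this, Real.log_neg_eq_log, mul_comm]

lemma tendsto_arg_slice_right {x : ℝ} (hx : 0 < x) :
    Tendsto (fun u : ℝ => argS (x, u)) (𝓝[>] (0:ℝ)) (𝓝 0) := by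
  have hmap : Tendsto (fun u : ℝ => -((x : ℂ) + (u : ℂ) * Complex.I)) (𝓝[>] (0:ℝ))
      (𝓝[{z : ℂ | z.im < 0}] (-(x : ℂ))) := by
    apply tendsto_nhdsWithin_of_tendsto_nhds_of_eventually_within
    · have : Continuous (fun u : ℝ => -((x : ℂ) + (u : ℂ) * Complex.I)) := by continuity
      have h0 := (this.tendsto 0).mono_left (nhdsWithin_le_nhds (s := Set.Ioi (0:ℝ)))
      simpa using h0
    · filter_upwards [self_mem_nhdsWithin] with u hu
      have him : (-((x : ℂ) + (u : ℂ) * Complex.I)).im = -u := by simp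
      simp only [Set.mem_setOf_eq, him]
      simp only [Set.mem_Ioi] at hu
      linarith
  have harg := (Complex.tendsto_arg_nhdsWithin_im_neg_of_re_neg_of_im_zero
    (z := -(x : ℂ)) (by simpa using hx) (by simp)).comp hmap
  have : Tendsto (fun u : ℝ => Real.pi + Complex.arg (-((x : ℂ) + (u : ℂ) * Complex.I)))
      (𝓝[>] (0:ℝ)) (𝓝 (Real.pi + -Real.pi)) := tendsto_const_nhds.add harg
  simpa [argS] using this

lemma tendsto_arg_slice_left {x : ℝ} (hx : 0 < x) :
    Tendsto (fun u : ℝ => argS (x, u)) (𝓝[<] (0:ℝ)) (𝓝 (2 * Real.pi)) := by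
  have hmap : Tendsto (fun u : ℝ => -((x : ℂ) + (u : ℂ) * Complex.I)) (𝓝[<] (0:ℝ))
      (𝓝[{z : ℂ | 0 ≤ z.im}] (-(x : ℂ))) := by
    apply tendsto_nhdsWithin_of_tendsto_nhds_of_eventually_within
    · have : Continuous (fun u : ℝ => -((x : ℂ) + (u : ℂ) * Complex.I)) := by continuity
      have h0 := (this.tendsto 0).mono_left (nhdsWithin_le_nhds (s := Set.Iio (0:ℝ)))
      simpa using h0
    · filter_upwards [self_mem_nhdsWithin] with u hu
      have him : (-((x : ℂ) + (u : ℂ) * Complex.I)).im = -u := by simp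
      simp only [Set.mem_setOf_eq, him]
      simp only [Set.mem_Iio] at hu
      linarith
  have harg := (Complex.tendsto_arg_nhdsWithin_im_nonneg_of_re_neg_of_im_zero
    (z := -(x : ℂ)) (by simpa using hx) (by simp)).comp hmap
  have : Tendsto (fun u : ℝ => Real.pi + Complex.arg (-((x : ℂ) + (u : ℂ) * Complex.I)))
      (𝓝[<] (0:ℝ)) (𝓝 (Real.pi + Real.pi)) := tendsto_const_nhds.add harg
  simpa [argS, two_mul] using this

lemma tendsto_psi_right {s : ℝ × ℝ → ℝ} (hc : Continuous s) {x : ℝ} (hx : 0 ≤ x) :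
    Tendsto (fun u : ℝ => ψ s (x, u)) (𝓝[>] (0:ℝ)) (𝓝 (s (x, 0))) := by
  have hsl := tendsto_s_slice hc x _ (nhdsWithin_le_nhds (s := Set.Ioi (0:ℝ)))
  rcases hx.eq_or_lt with h0 | hpos
  · subst h0
    have h1 : Tendsto (fun u : ℝ => (1 / (2 * Real.pi)) *
        (u * Real.log (nrm (0, u)) + 0 * argS (0, u)) + s (0, u)) (𝓝[>] (0:ℝ))
        (𝓝 ((1 / (2 * Real.pi)) * (0 + 0) + s (0, 0))) := by
      refine Tendsto.add (Tendsto.const_mul _ (Tendsto.add tendsto_log_slice_zero_right ?_)) hsl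
      simpa using (tendsto_const_nhds (x := (0:ℝ)) (f := 𝓝[>] (0:ℝ))).congr (by simp)
    simpa [ψ] using h1
  · have h1 : Tendsto (fun u : ℝ => (1 / (2 * Real.pi)) *
        (u * Real.log (nrm (x, u)) + x * argS (x, u)) + s (x, u)) (𝓝[>] (0:ℝ))
        (𝓝 ((1 / (2 * Real.pi)) * (0 + x * 0) + s (x, 0))) := by
      refine Tendsto.add (Tendsto.const_mul _ (Tendsto.add
        ((tendsto_log_slice hpos).mono_left nhdsWithin_le_nhds)
        (Tendsto.const_mul _ (tendsto_arg_slice_right hpos)))) hsl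
    simpa [ψ] using h1

lemma tendsto_psi_left {s : ℝ × ℝ → ℝ} (hc : Continuous s) {x : ℝ} (hx : 0 ≤ x) :
    Tendsto (fun u : ℝ => ψ s (x, u)) (𝓝[<] (0:ℝ)) (𝓝 (x + s (x, 0))) := by
  have hsl := tendsto_s_slice hc x _ (nhdsWithin_le_nhds (s := Set.Iio (0:ℝ)))
  rcases hx.eq_or_lt with h0 | hpos
  · subst h0
    have h1 : Tendsto (fun u : ℝ => (1 / (2 * Real.pi)) *
        (u * Real.log (nrm (0, u)) + 0 * argS (0, u)) + s (0, u)) (𝓝[<] (0:ℝ))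
        (𝓝 ((1 / (2 * Real.pi)) * (0 + 0) + s (0, 0))) := by
      refine Tendsto.add (Tendsto.const_mul _ (Tendsto.add tendsto_log_slice_zero_left ?_)) hsl
      simpa using (tendsto_const_nhds (x := (0:ℝ)) (f := 𝓝[<] (0:ℝ))).congr (by simp)
    simpa [ψ] using h1
  · have h1 : Tendsto (fun u : ℝ => (1 / (2 * Real.pi)) *
        (u * Real.log (nrm (x, u)) + x * argS (x, u)) + s (x, u)) (𝓝[<] (0:ℝ))
        (𝓝 ((1 / (2 * Real.pi)) * (0 + x * (2 * Real.pi)) + s (x, 0))) := by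
      refine Tendsto.add (Tendsto.const_mul _ (Tendsto.add
        ((tendsto_log_slice hpos).mono_left nhdsWithin_le_nhds)
        (Tendsto.const_mul _ (tendsto_arg_slice_left hpos)))) hsl
    have hpi : (2 * Real.pi) ≠ 0 := by positivity
    have : (1 / (2 * Real.pi)) * (0 + x * (2 * Real.pi)) + s (x, 0) = x + s (x, 0) := by
      field_simp
      ring
    rw [this] at h1
    simpa [ψ] using h1

lemma nrm_nonneg (H : ℝ × ℝ) : 0 ≤ nrm H := Real.sqrt_nonneg _

lemma sq_nrm (x t : ℝ) : nrm (x, t) ^ 2 = x ^ 2 + t ^ 2 := by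
  unfold nrm; exact Real.sq_sqrt (by positivity)

lemma abs_fst_le_nrm (x t : ℝ) : |x| ≤ nrm (x, t) := by
  rw [← Real.sqrt_sq_eq_abs]
  exact Real.sqrt_le_sqrt (by nlinarith [sq_nonneg t])

lemma abs_snd_le_nrm (x t : ℝ) : |t| ≤ nrm (x, t) := by
  rw [← Real.sqrt_sq_eq_abs]
  exact Real.sqrt_le_sqrt (by nlinarith [sq_nonneg x])

/-- If `s` is C¹, then `Ψ` is injective on every small enough slit annulus
`V_* = {H ∈ P : ρ₁ < |H| < ρ₂}`. -/
theorem stmt2 (s : ℝ × ℝ → ℝ) (hs : ContDiff ℝ 1 s) :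
    ∃ ρ₀ > 0, ∀ ρ₁ ρ₂ : ℝ, 0 < ρ₁ → ρ₁ < ρ₂ → ρ₂ ≤ ρ₀ →
      Set.InjOn (ΨM s) {H ∈ slitP | ρ₁ < nrm H ∧ nrm H < ρ₂} := by
  have hcont : Continuous s := hs.continuous
  have hpi : (0:ℝ) < 2 * Real.pi := by positivity
  -- bound on the partial derivative of s
  have hg : Continuous (fun H : ℝ × ℝ => fderiv ℝ s H ((0:ℝ), (1:ℝ))) :=
    (ContinuousLinearMap.apply ℝ ℝ ((0:ℝ), (1:ℝ))).continuous.comp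
      (hs.continuous_fderiv one_ne_zero)
  obtain ⟨M, hM⟩ := (isCompact_closedBall (0 : ℝ × ℝ) 1).exists_bound_of_continuousOn
    hg.continuousOn
  set M' : ℝ := max M 0 with hM'
  set ρ₀ : ℝ := Real.exp (-(1 + 2 * Real.pi * (M' + 1))) with hρ₀
  have hρpos : 0 < ρ₀ := Real.exp_pos _
  have hρ1 : ρ₀ ≤ 1 := by
    rw [hρ₀, Real.exp_le_one_iff]
    nlinarith [Real.pi_pos, le_max_right M 0]
  -- negativity of the slice derivative on the ball of radius ρ₀
  have hneg : ∀ x t : ℝ, (x < 0 ∨ t ≠ 0) → nrm (x, t) ≤ ρ₀ →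
      (Real.log (nrm (x, t)) + 1) / (2 * Real.pi) + fderiv ℝ s (x, t) (0, 1) < 0 := by
    intro x t hx hle
    have hpos : 0 < nrm (x, t) := by
      unfold nrm
      apply Real.sqrt_pos.mpr
      rcases hx with h | h
      · nlinarith [sq_nonneg t]
      · positivity
    have hlog : Real.log (nrm (x, t)) ≤ -(1 + 2 * Real.pi * (M' + 1)) := by
      calc Real.log (nrm (x, t)) ≤ Real.log ρ₀ := Real.log_le_log hpos hle
        _ = -(1 + 2 * Real.pi * (M' + 1)) := by rw [hρ₀, Real.log_exp]
    have hball : (x, t) ∈ Metric.closedBall (0 : ℝ × ℝ) 1 := by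
      rw [Metric.mem_closedBall, dist_zero_right, Prod.norm_def]
      simp only [Real.norm_eq_abs]
      exact max_le ((abs_fst_le_nrm x t).trans (hle.trans hρ1))
        ((abs_snd_le_nrm x t).trans (hle.trans hρ1))
    have hbd : |fderiv ℝ s (x, t) (0, 1)| ≤ M' := by
      have := hM (x, t) hball
      rw [Real.norm_eq_abs] at this
      exact this.trans (le_max_left M 0)
    have h1 : (Real.log (nrm (x, t)) + 1) / (2 * Real.pi) ≤ -(M' + 1) := by
      rw [div_le_iff₀ hpi]
      nlinarith [Real.pi_pos]
    have h2 : fderiv ℝ s (x, t) (0, 1) ≤ M' := (abs_le.mp hbd).2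
    linarith
  refine ⟨ρ₀, hρpos, ?_⟩
  intro ρ₁ ρ₂ hρ₁pos hρ₁₂ hρ₂ H hH H' hH' heq
  obtain ⟨x, t⟩ := H
  obtain ⟨x', t'⟩ := H'
  have hx1 : x = x' := congrArg Prod.fst heq
  subst hx1
  have hψeq : ψ s (x, t) = ψ s (x, t') := congrArg Prod.snd heq
  suffices ht : t = t' by rw [ht]
  have hslit : ¬(0 ≤ x ∧ t = 0) := hH.1
  have hslit' : ¬(0 ≤ x ∧ t' = 0) := hH'.1
  have hn2 : nrm (x, t) < ρ₂ := hH.2.2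
  have hn2' : nrm (x, t') < ρ₂ := hH'.2.2
  have hx2 : x ^ 2 + t ^ 2 < ρ₂ ^ 2 := by
    have h := sq_nrm x t
    nlinarith [nrm_nonneg (x, t)]
  have hx2' : x ^ 2 + t' ^ 2 < ρ₂ ^ 2 := by
    have h := sq_nrm x t'
    nlinarith [nrm_nonneg (x, t')]
  set d : ℝ := Real.sqrt (ρ₂ ^ 2 - x ^ 2) with hd
  have hd2 : d ^ 2 = ρ₂ ^ 2 - x ^ 2 := Real.sq_sqrt (by nlinarith [sq_nonneg t])
  have hdnn : 0 ≤ d := Real.sqrt_nonneg _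
  have habs : |t| < d := by
    rw [← Real.sqrt_sq_eq_abs, hd]
    exact Real.sqrt_lt_sqrt (sq_nonneg t) (by nlinarith)
  have habs' : |t'| < d := by
    rw [← Real.sqrt_sq_eq_abs, hd]
    exact Real.sqrt_lt_sqrt (sq_nonneg t') (by nlinarith)
  have hρ₂nn : 0 ≤ ρ₂ := by linarith
  have hnrm_le : ∀ u : ℝ, |u| ≤ d → nrm (x, u) ≤ ρ₀ := by
    intro u hu
    have hu2 : u ^ 2 ≤ d ^ 2 := by nlinarith [abs_nonneg u, sq_abs u]
    have h1 : nrm (x, u) ≤ ρ₂ := by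
      unfold nrm
      calc Real.sqrt ((x, u).1 ^ 2 + (x, u).2 ^ 2) ≤ Real.sqrt (ρ₂ ^ 2) :=
            Real.sqrt_le_sqrt (by simp; nlinarith)
        _ = ρ₂ := Real.sqrt_sq hρ₂nn
    linarith
  have key : ∀ S : Set ℝ, Convex ℝ S → (∀ u ∈ S, x < 0 ∨ u ≠ 0) → (∀ u ∈ S, |u| ≤ d) →
      StrictAntiOn (fun u => ψ s (x, u)) S := by
    intro S hconv hsl hbd
    apply strictAntiOn_of_deriv_neg hconv
    · intro u hu
      exact (hasDerivAt_slice s hs x u (hsl u hu)).continuousAt.continuousWithinAt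
    · intro u hu
      have huS := interior_subset hu
      rw [(hasDerivAt_slice s hs x u (hsl u huS)).deriv]
      exact hneg x u (hsl u huS) (hnrm_le u (hbd u huS))
  rcases lt_or_ge x 0 with hxneg | hxpos
  · have hS := key (Set.Icc (-d) d) (convex_Icc _ _) (fun u _ => Or.inl hxneg)
      (fun u hu => abs_le.mpr ⟨hu.1, hu.2⟩)
    have hm : t ∈ Set.Icc (-d) d := by
      have h := abs_le.mp habs.le; exact ⟨h.1, h.2⟩
    have hm' : t' ∈ Set.Icc (-d) d := by
      have h := abs_le.mp habs'.le; exact ⟨h.1, h.2⟩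
    exact hS.injOn hm hm' hψeq
  · have ht0 : t ≠ 0 := fun h0 => hslit ⟨hxpos, h0⟩
    have ht0' : t' ≠ 0 := fun h0 => hslit' ⟨hxpos, h0⟩
    have hSpos := key (Set.Ioc 0 d) (convex_Ioc _ _) (fun u hu => Or.inr (ne_of_gt hu.1))
      (fun u hu => by rw [abs_of_pos hu.1]; exact hu.2)
    have hSneg := key (Set.Ico (-d) 0) (convex_Ico _ _) (fun u hu => Or.inr (ne_of_lt hu.2))
      (fun u hu => by rw [abs_of_neg hu.2]; linarith [hu.1])
    have cross : ∀ a b : ℝ, 0 < a → a < d → -d < b → b < 0 → ψ s (x, a) < ψ s (x, b) := by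
      intro a b ha had hbd' hb
      have hma : a ∈ Set.Ioc 0 d := ⟨ha, had.le⟩
      have hma2 : a / 2 ∈ Set.Ioc 0 d := ⟨half_pos ha, by linarith⟩
      have h1 : ψ s (x, a) < ψ s (x, a / 2) := hSpos hma2 hma (by linarith)
      have h2 : ψ s (x, a / 2) ≤ s (x, 0) := by
        refine ge_of_tendsto (tendsto_psi_right hcont hxpos) ?_
        filter_upwards [Ioo_mem_nhdsGT_of_mem (Set.left_mem_Ico.mpr (half_pos ha))] with u hu
        exact (hSpos ⟨hu.1, by linarith [hu.2, hma2.2]⟩ hma2 hu.2).le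
      have hmb : b ∈ Set.Ico (-d) 0 := ⟨hbd'.le, hb⟩
      have hmb2 : b / 2 ∈ Set.Ico (-d) 0 := ⟨by linarith, by linarith⟩
      have h3 : x + s (x, 0) ≤ ψ s (x, b / 2) := by
        refine le_of_tendsto (tendsto_psi_left hcont hxpos) ?_
        filter_upwards [Ioo_mem_nhdsLT_of_mem
          (Set.right_mem_Ioc.mpr (by linarith : b / 2 < (0:ℝ)))] with u hu
        exact (hSneg hmb2 ⟨by linarith [hu.1, hmb2.1], hu.2⟩ hu.1).le
      have h4 : ψ s (x, b / 2) < ψ s (x, b) := hSneg hmb hmb2 (by linarith)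
      linarith
    rcases ht0.lt_or_gt with htn | htp <;> rcases ht0'.lt_or_gt with htn' | htp'
    · have hm : t ∈ Set.Ico (-d) 0 := ⟨by linarith [(abs_lt.mp habs).1], htn⟩
      have hm' : t' ∈ Set.Ico (-d) 0 := ⟨by linarith [(abs_lt.mp habs').1], htn'⟩
      exact hSneg.injOn hm hm' hψeq
    · exfalso
      have := cross t' t htp' (abs_lt.mp habs').2 (abs_lt.mp habs).1 htn
      linarith
    · exfalso
      have := cross t t' htp (abs_lt.mp habs).2 (abs_lt.mp habs').1 htn'
      linarith
    · have hm : t ∈ Set.Ioc 0 d := ⟨htp, (abs_lt.mp habs).2.le⟩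
      have hm' : t' ∈ Set.Ioc 0 d := ⟨htp', (abs_lt.mp habs').2.le⟩
      exact hSpos.injOn hm hm' hψeq
end

section
/- Let s : ℝ² → ℝ be real analytic. Then there exists ρ₀ > 0 such that for all radii 0 < ρ₁ < ρ₂ ≤ ρ₀, the image A = Ψ(V_*) of the slit annulus V_* = {H ∈ P : ρ₁ < |H| < ρ₂} is an open subset of ℝ² and Ψ restricted to V_* is a homeomorphism onto A whose inverse map A → V_* is real analytic. -/
open Real Filter Topology MeasureTheory

noncomputable def zm (H : ℝ × ℝ) : ℂ := -(H.1 + H.2 * Complex.I)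

lemma isOpen_slitP : IsOpen slitP := by
  have : slitP = ((fun H : ℝ × ℝ => H.1) ⁻¹' Set.Iio 0) ∪ ((fun H : ℝ × ℝ => H.2) ⁻¹' {0}ᶜ) := by
    ext H; simp only [slitP, Set.mem_setOf_eq, not_and_or, not_le, Set.mem_preimage,
      Set.mem_union, Set.mem_Iio, Set.mem_compl_iff, Set.mem_singleton_iff]
  rw [this]
  exact ((isOpen_Iio).preimage continuous_fst).union ((isOpen_compl_singleton).preimage continuous_snd)

lemma mem_slitP_iff {H : ℝ × ℝ} : H ∈ slitP ↔ H.1 < 0 ∨ H.2 ≠ 0 := by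
  constructor
  · intro h; rcases not_and_or.1 h with h | h
    · exact Or.inl (not_le.1 h)
    · exact Or.inr h
  · rintro (h | h) ⟨h1, h2⟩
    · exact absurd h1 (not_le.2 h)
    · exact h h2

lemma zm_mem_slitPlane {H : ℝ × ℝ} (h : H ∈ slitP) : zm H ∈ Complex.slitPlane := by
  rw [mem_slitP_iff] at h
  simp only [Complex.mem_slitPlane_iff, zm]
  rcases h with h | h
  · left; simp [h]
  · right; simp [h]

lemma nrm_pos_of_slitP {H : ℝ × ℝ} (h : H ∈ slitP) : 0 < nrm H := by
  rw [mem_slitP_iff] at h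
  apply Real.sqrt_pos.2
  rcases h with h | h
  · nlinarith [sq_nonneg H.2]
  · nlinarith [sq_nonneg H.1, sq_nonneg H.2, pow_pos (abs_pos.2 h) 2, sq_abs H.2]

lemma abs_zm (H : ℝ × ℝ) : ‖zm H‖ = nrm H := by
  simp [zm, nrm, Complex.norm_def, Complex.normSq_apply]
  ring_nf

lemma normSq_zm (H : ℝ × ℝ) : Complex.normSq (zm H) = H.1 ^ 2 + H.2 ^ 2 := by
  simp [zm, Complex.normSq_apply]; ring

lemma log_nrm (H : ℝ × ℝ) : Real.log (nrm H) = (1 / 2) * Real.log (H.1 ^ 2 + H.2 ^ 2) := by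
  rw [nrm, Real.log_sqrt (by positivity)]; ring

lemma argS_eq (H : ℝ × ℝ) : argS H = Real.pi + (Complex.log (zm H)).im := by
  rw [Complex.log_im]; rfl

lemma log_re_zm (H : ℝ × ℝ) : (Complex.log (zm H)).re = Real.log (nrm H) := by
  rw [Complex.log_re, abs_zm]


lemma analyticAt_zm (H : ℝ × ℝ) : AnalyticAt ℝ zm H := by
  unfold zm
  exact (((Complex.ofRealCLM.analyticAt _).comp analyticAt_fst).add
    (((Complex.ofRealCLM.analyticAt _).comp analyticAt_snd).mul analyticAt_const)).neg

lemma psi_analyticAt (s : ℝ × ℝ → ℝ) (hs : ∀ x, AnalyticAt ℝ s x) {H : ℝ × ℝ}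
    (h : H ∈ slitP) : AnalyticAt ℝ (ψ s) H := by
  have hlog : AnalyticAt ℝ (fun K => Complex.log (zm K)) H :=
    ((analyticAt_clog (zm_mem_slitPlane h)).restrictScalars).comp (analyticAt_zm H)
  have heq : ψ s = fun K =>
      (1 / (2 * Real.pi)) * (K.2 * (Complex.log (zm K)).re
        + K.1 * (Real.pi + (Complex.log (zm K)).im)) + s K := by
    funext K; rw [ψ, log_re_zm, argS_eq]
  rw [heq]
  exact (analyticAt_const.mul ((analyticAt_snd.mul
      ((Complex.reCLM.analyticAt _).comp hlog)).add
    (analyticAt_fst.mul (analyticAt_const.add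
      ((Complex.imCLM.analyticAt _).comp hlog))))).add (hs H)

lemma hasDerivAt_psi (s : ℝ × ℝ → ℝ) (hs : ∀ x, AnalyticAt ℝ s x) {x y : ℝ}
    (h : (x, y) ∈ slitP) :
    HasDerivAt (fun t => ψ s (x, t))
      ((1 / (2 * Real.pi)) * (Real.log (nrm (x, y)) + 1) + pd₂ s (x, y)) y := by
  have h0 : x ^ 2 + y ^ 2 ≠ 0 := by
    have := nrm_pos_of_slitP h
    rw [nrm] at this
    intro hc
    rw [hc] at this
    simp at this
  have A : HasDerivAt (fun t : ℝ => x ^ 2 + t ^ 2) (2 * y) y := by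
    simpa using (hasDerivAt_pow 2 y).const_add (x ^ 2)
  have B : HasDerivAt (fun t : ℝ => Real.log (x ^ 2 + t ^ 2)) ((x ^ 2 + y ^ 2)⁻¹ * (2 * y)) y :=
    by have := (Real.hasDerivAt_log h0).comp y A; exact this
  have C : HasDerivAt (fun t : ℝ => t * ((1 / 2) * Real.log (x ^ 2 + t ^ 2)))
      (1 * ((1 / 2) * Real.log (x ^ 2 + y ^ 2)) + y * ((1 / 2) * ((x ^ 2 + y ^ 2)⁻¹ * (2 * y)))) y :=
    (hasDerivAt_id y).mul (B.const_mul (1 / 2))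
  have D : HasDerivAt (fun t : ℝ => zm (x, t)) (-Complex.I) y := by
    have h1 : HasDerivAt (fun t : ℝ => (t : ℂ)) 1 y := by
      simpa using (hasDerivAt_id y).ofReal_comp
    have h2 := ((h1.mul_const Complex.I).const_add (x : ℂ)).neg
    convert h2 using 1
    · rfl
    · funext t; simp [zm]
    · simp
  have E : HasDerivAt (fun t : ℝ => Complex.log (zm (x, t)))
      ((-Complex.I) * (zm (x, y))⁻¹) y := by
    have hlog := (Complex.hasDerivAt_log (zm_mem_slitPlane h)).hasFDerivAt.restrictScalars ℝ
    have := hlog.comp_hasDerivAt y D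
    convert this using 1
    · rfl
    · funext t; rfl
    · simp [ContinuousLinearMap.toSpanSingleton_apply]
  have F : HasDerivAt (fun t : ℝ => (Complex.log (zm (x, t))).im) (x / (x ^ 2 + y ^ 2)) y := by
    have h3 := Complex.imCLM.hasFDerivAt.comp_hasDerivAt y E
    have h4 : Complex.imCLM ((-Complex.I) * (zm (x, y))⁻¹) = x / (x ^ 2 + y ^ 2) := by
      rw [Complex.imCLM_apply, ← div_eq_mul_inv, Complex.div_im, normSq_zm]
      simp [zm]
      try ring
    rw [h4] at h3
    exact h3
  have G : HasDerivAt (fun t : ℝ => x * (Real.pi + (Complex.log (zm (x, t))).im))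
      (x * (x / (x ^ 2 + y ^ 2))) y := (F.const_add Real.pi).const_mul x
  have Hs : HasDerivAt (fun t : ℝ => s (x, t)) (pd₂ s (x, y)) y := by
    have hline : HasDerivAt (fun t : ℝ => ((x, t) : ℝ × ℝ)) ((0 : ℝ), (1 : ℝ)) y :=
      (hasDerivAt_const y x).prodMk (hasDerivAt_id y)
    exact ((hs (x, y)).differentiableAt.hasFDerivAt).comp_hasDerivAt y hline
  have total := ((C.add G).const_mul (1 / (2 * Real.pi))).add Hs
  have heq : (fun t : ℝ => ψ s (x, t)) = fun t =>
      (1 / (2 * Real.pi)) * ((t * ((1 / 2) * Real.log (x ^ 2 + t ^ 2)))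
        + x * (Real.pi + (Complex.log (zm (x, t))).im)) + s (x, t) := by
    funext t
    rw [ψ, log_nrm, argS_eq]
  rw [heq]
  convert total using 1
  · rfl
  · rfl
  · rfl
  rw [log_nrm]
  field_simp
  ring


-- continuity of pd₂ s
lemma continuous_pd2 (s : ℝ × ℝ → ℝ) (hs : ∀ x, AnalyticAt ℝ s x) :
    Continuous (pd₂ s) := by
  have h1 : AnalyticOnNhd ℝ (fderiv ℝ s) Set.univ :=
    AnalyticOnNhd.fderiv (fun x _ => hs x)
  have h2 : Continuous (fderiv ℝ s) :=
    continuousOn_univ.1 h1.continuousOn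
  exact (ContinuousLinearMap.apply ℝ ℝ ((0 : ℝ), (1 : ℝ))).continuous.comp h2

-- the bound M and ρ₀
lemma exists_rho0 (s : ℝ × ℝ → ℝ) (hs : ∀ x, AnalyticAt ℝ s x) :
    ∃ ρ₀ : ℝ, 0 < ρ₀ ∧ ρ₀ ≤ 1 ∧ ∀ x y : ℝ, (x, y) ∈ slitP → nrm (x, y) < ρ₀ →
      (1 / (2 * Real.pi)) * (Real.log (nrm (x, y)) + 1) + pd₂ s (x, y) < 0 := by
  obtain ⟨M, hM⟩ := (isCompact_closedBall (0 : ℝ × ℝ) 1).exists_bound_of_continuousOn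
    ((continuous_pd2 s hs).continuousOn)
  have hM0 : 0 ≤ M := le_trans (norm_nonneg _) (hM 0 (Metric.mem_closedBall_self zero_le_one))
  refine ⟨min 1 (Real.exp (-(2 * Real.pi * (M + 1)))), lt_min one_pos (Real.exp_pos _),
    min_le_left _ _, ?_⟩
  intro x y hsl hlt
  have hpos := nrm_pos_of_slitP hsl
  have hπ : (0 : ℝ) < 2 * Real.pi := by positivity
  have hball : (x, y) ∈ Metric.closedBall (0 : ℝ × ℝ) 1 := by
    rw [Metric.mem_closedBall, dist_zero_right, Prod.norm_def]
    have hx : |x| ≤ nrm (x, y) := by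
      rw [nrm, ← Real.sqrt_sq_eq_abs]
      exact Real.sqrt_le_sqrt (by nlinarith [sq_nonneg y])
    have hy : |y| ≤ nrm (x, y) := by
      rw [nrm, ← Real.sqrt_sq_eq_abs]
      exact Real.sqrt_le_sqrt (by nlinarith [sq_nonneg x])
    have : nrm (x, y) ≤ 1 := le_trans hlt.le (min_le_left _ _)
    simp only [Real.norm_eq_abs]
    exact max_le (hx.trans this) (hy.trans this)
  have hpd : |pd₂ s (x, y)| ≤ M := by
    have := hM _ hball
    simpa [Real.norm_eq_abs] using this
  have hlog : Real.log (nrm (x, y)) < -(2 * Real.pi * (M + 1)) := by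
    have h1 : nrm (x, y) < Real.exp (-(2 * Real.pi * (M + 1))) :=
      lt_of_lt_of_le hlt (min_le_right _ _)
    calc Real.log (nrm (x, y)) < Real.log (Real.exp (-(2 * Real.pi * (M + 1)))) :=
          Real.log_lt_log hpos h1
      _ = -(2 * Real.pi * (M + 1)) := Real.log_exp _
  have habs : -M ≤ pd₂ s (x, y) := neg_le_of_abs_le hpd |>.trans_eq rfl
  have h2 : (1 / (2 * Real.pi)) * (Real.log (nrm (x, y)) + 1)
      < (1 / (2 * Real.pi)) * (-(2 * Real.pi * (M + 1)) + 1) := by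
    apply mul_lt_mul_of_pos_left _ (by positivity)
    linarith
  have h3 : (1 / (2 * Real.pi)) * (-(2 * Real.pi * (M + 1)) + 1) ≤ -M - 1 + 1 / (2 * Real.pi) := by
    rw [mul_add, mul_neg]
    rw [div_mul_eq_mul_div, one_mul, mul_comm]
    rw [mul_div_assoc]
    rw [div_self hπ.ne']
    ring_nf
    linarith
  have h4 : 1 / (2 * Real.pi) < 1 := by
    rw [div_lt_one hπ]
    nlinarith [Real.pi_gt_three]
  linarith [le_of_abs_le hpd, h2, h3, h4]


variable {s : ℝ × ℝ → ℝ} (hs : ∀ x, AnalyticAt ℝ s x) {ρ₀ : ℝ}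


lemma nrm_le_max {x t y₁ y₂ : ℝ} (h1 : y₁ ≤ t) (h2 : t ≤ y₂) :
    nrm (x, t) ≤ max (nrm (x, y₁)) (nrm (x, y₂)) := by
  have ht2 : t ^ 2 ≤ y₁ ^ 2 ∨ t ^ 2 ≤ y₂ ^ 2 := by
    rcases le_total t 0 with ht | ht
    · left; nlinarith
    · right; nlinarith
  rcases ht2 with h | h
  · exact le_max_of_le_left (Real.sqrt_le_sqrt (by simpa using by nlinarith))
  · exact le_max_of_le_right (Real.sqrt_le_sqrt (by simpa using by nlinarith))

include hs in
/-- monotonicity along vertical segments -/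
lemma psi_segment_lt
    (hρ : ∀ x y : ℝ, (x, y) ∈ slitP → nrm (x, y) < ρ₀ →
      (1 / (2 * Real.pi)) * (Real.log (nrm (x, y)) + 1) + pd₂ s (x, y) < 0)
    {x y₁ y₂ : ℝ} (h12 : y₁ < y₂)
    (hseg : ∀ t ∈ Set.Icc y₁ y₂, (x, t) ∈ slitP ∧ nrm (x, t) < ρ₀) :
    ψ s (x, y₂) < ψ s (x, y₁) := by
  have hanti : StrictAntiOn (fun t => ψ s (x, t)) (Set.Icc y₁ y₂) := by
    apply strictAntiOn_of_deriv_neg (convex_Icc y₁ y₂)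
    · intro t ht
      exact (hasDerivAt_psi s hs (hseg t ht).1).continuousAt.continuousWithinAt
    · intro t ht
      rw [interior_Icc] at ht
      have hm := hseg t (Set.Ioo_subset_Icc_self ht)
      rw [(hasDerivAt_psi s hs hm.1).deriv]
      exact hρ x t hm.1 hm.2
  exact hanti (Set.left_mem_Icc.2 h12.le) (Set.right_mem_Icc.2 h12.le) h12

lemma argS_eq_zm (H : ℝ × ℝ) : argS H = Real.pi + Complex.arg (zm H) := rfl

include hs in
/-- limit from above -/
lemma tendsto_psi_above {x : ℝ} (hx : 0 ≤ x) :
    Tendsto (fun t => ψ s (x, t)) (𝓝[>] (0 : ℝ)) (𝓝 (s (x, 0))) := by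
  have hC : Tendsto (fun t : ℝ => s (x, t)) (𝓝[>] (0 : ℝ)) (𝓝 (s (x, 0))) :=
    tendsto_nhdsWithin_of_tendsto_nhds (((hs (x, 0)).continuousAt.comp
      ((continuous_const.prodMk continuous_id).continuousAt)).tendsto)
  have hnrm0 : nrm (x, 0) = x := by
    simp only [nrm]
    rw [show x ^ 2 + (0:ℝ) ^ 2 = x ^ 2 by ring]
    exact Real.sqrt_sq hx
  have hA : Tendsto (fun t : ℝ => t * Real.log (nrm (x, t))) (𝓝[>] (0 : ℝ)) (𝓝 0) := by
    rcases hx.eq_or_lt with h | h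
    · subst h
      have h1 := tendsto_log_mul_rpow_nhdsGT_zero one_pos
      apply h1.congr'
      filter_upwards [self_mem_nhdsWithin] with t (ht : 0 < t)
      have h2 : nrm (0, t) = t := by
        simp only [nrm]
        rw [show (0:ℝ) ^ 2 + t ^ 2 = t ^ 2 by ring]
        exact Real.sqrt_sq ht.le
      rw [h2, Real.rpow_one, mul_comm]
    · apply tendsto_nhdsWithin_of_tendsto_nhds
      have hnrm_cont : Continuous (fun t : ℝ => nrm (x, t)) := by
        apply Real.continuous_sqrt.comp
        fun_prop
      have hlogcont : ContinuousAt (fun t : ℝ => Real.log (nrm (x, t))) 0 :=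
        (Real.continuousAt_log (by rw [hnrm0]; exact h.ne')).comp hnrm_cont.continuousAt
      have := (continuousAt_id.mul hlogcont).tendsto
      simpa [Pi.mul_def] using this
  have hB : Tendsto (fun t : ℝ => x * argS (x, t)) (𝓝[>] (0 : ℝ)) (𝓝 0) := by
    rcases hx.eq_or_lt with h | h
    · subst h
      simp only [zero_mul]
      exact tendsto_const_nhds
    · have harg : Tendsto (fun t : ℝ => Complex.arg (zm (x, t))) (𝓝[>] (0 : ℝ))
          (𝓝 (-Real.pi)) := by
        have hre : ((-x : ℝ) : ℂ).re < 0 := by simpa using h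
        have him : ((-x : ℝ) : ℂ).im = 0 := by simp
        apply (Complex.tendsto_arg_nhdsWithin_im_neg_of_re_neg_of_im_zero hre him).comp
        apply tendsto_nhdsWithin_of_tendsto_nhds_of_eventually_within
        · have hzc : Continuous (fun t : ℝ => zm (x, t)) := by
            unfold zm; fun_prop
          have := hzc.tendsto 0
          apply this.congr' (by rfl) |>.mono_left nhdsWithin_le_nhds |>.congr (fun _ => rfl)
            |>.mono_right ?_
          have hz0 : zm (x, 0) = ((-x : ℝ) : ℂ) := by
            simp [zm]
          rw [hz0]
        · filter_upwards [self_mem_nhdsWithin] with t (ht : 0 < t)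
          show (zm (x, t)).im < 0
          simp [zm]
          exact ht
      have h2 : Tendsto (fun t : ℝ => x * argS (x, t)) (𝓝[>] (0 : ℝ))
          (𝓝 (x * (Real.pi + -Real.pi))) := by
        apply Tendsto.const_mul
        exact (tendsto_const_nhds.add harg).congr (fun t => (argS_eq_zm (x, t)).symm)
      simpa using h2
  have htot := ((hA.add hB).const_mul (1 / (2 * Real.pi))).add hC
  have : (1 / (2 * Real.pi)) * ((0:ℝ) + 0) + s (x, 0) = s (x, 0) := by ring
  rw [this] at htot
  exact htot.congr (fun t => by simp [ψ])

include hs in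
/-- limit from below -/
lemma tendsto_psi_below {x : ℝ} (hx : 0 ≤ x) :
    Tendsto (fun t => ψ s (x, t)) (𝓝[<] (0 : ℝ)) (𝓝 (x + s (x, 0))) := by
  have hC : Tendsto (fun t : ℝ => s (x, t)) (𝓝[<] (0 : ℝ)) (𝓝 (s (x, 0))) :=
    tendsto_nhdsWithin_of_tendsto_nhds (((hs (x, 0)).continuousAt.comp
      ((continuous_const.prodMk continuous_id).continuousAt)).tendsto)
  have hnrm0 : nrm (x, 0) = x := by
    simp only [nrm]
    rw [show x ^ 2 + (0:ℝ) ^ 2 = x ^ 2 by ring]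
    exact Real.sqrt_sq hx
  have hA : Tendsto (fun t : ℝ => t * Real.log (nrm (x, t))) (𝓝[<] (0 : ℝ)) (𝓝 0) := by
    rcases hx.eq_or_lt with h | h
    · subst h
      have h1 := tendsto_log_mul_self_nhdsLT_zero
      apply h1.congr'
      filter_upwards [self_mem_nhdsWithin] with t (ht : t < 0)
      have h2 : nrm (0, t) = -t := by
        simp only [nrm]
        rw [show (0:ℝ) ^ 2 + t ^ 2 = (-t) ^ 2 by ring]
        exact Real.sqrt_sq (by linarith)
      rw [h2, Real.log_neg_eq_log, mul_comm]
    · apply tendsto_nhdsWithin_of_tendsto_nhds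
      have hnrm_cont : Continuous (fun t : ℝ => nrm (x, t)) := by
        apply Real.continuous_sqrt.comp
        fun_prop
      have hlogcont : ContinuousAt (fun t : ℝ => Real.log (nrm (x, t))) 0 :=
        (Real.continuousAt_log (by rw [hnrm0]; exact h.ne')).comp hnrm_cont.continuousAt
      have := (continuousAt_id.mul hlogcont).tendsto
      simpa [Pi.mul_def] using this
  have hB : Tendsto (fun t : ℝ => x * argS (x, t)) (𝓝[<] (0 : ℝ)) (𝓝 (2 * Real.pi * x)) := by
    rcases hx.eq_or_lt with h | h
    · subst h
      simp only [zero_mul, mul_zero]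
      exact tendsto_const_nhds
    · have harg : Tendsto (fun t : ℝ => Complex.arg (zm (x, t))) (𝓝[<] (0 : ℝ))
          (𝓝 Real.pi) := by
        have hre : ((-x : ℝ) : ℂ).re < 0 := by simpa using h
        have him : ((-x : ℝ) : ℂ).im = 0 := by simp
        apply (Complex.tendsto_arg_nhdsWithin_im_nonneg_of_re_neg_of_im_zero hre him).comp
        apply tendsto_nhdsWithin_of_tendsto_nhds_of_eventually_within
        · have hzc : Continuous (fun t : ℝ => zm (x, t)) := by
            unfold zm; fun_prop
          have h3 := (hzc.tendsto 0).mono_left (nhdsWithin_le_nhds (s := Set.Iio (0:ℝ)))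
          have hz0 : zm (x, 0) = ((-x : ℝ) : ℂ) := by simp [zm]
          rwa [hz0] at h3
        · filter_upwards [self_mem_nhdsWithin] with t (ht : t < 0)
          show 0 ≤ (zm (x, t)).im
          simp [zm]
          linarith
      have h2 : Tendsto (fun t : ℝ => x * argS (x, t)) (𝓝[<] (0 : ℝ))
          (𝓝 (x * (Real.pi + Real.pi))) := by
        apply Tendsto.const_mul
        exact (tendsto_const_nhds.add harg).congr (fun t => (argS_eq_zm (x, t)).symm)
      have : x * (Real.pi + Real.pi) = 2 * Real.pi * x := by ring
      rwa [this] at h2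
  have htot := ((hA.add hB).const_mul (1 / (2 * Real.pi))).add hC
  have hval : (1 / (2 * Real.pi)) * ((0:ℝ) + 2 * Real.pi * x) + s (x, 0) = x + s (x, 0) := by
    have hπ : (2 * Real.pi) ≠ 0 := by positivity
    field_simp
    ring
  rw [hval] at htot
  exact htot.congr (fun t => by simp [ψ])

lemma nrm_mono_snd {x t u : ℝ} (h : |t| ≤ |u|) : nrm (x, t) ≤ nrm (x, u) := by
  apply Real.sqrt_le_sqrt
  have := sq_abs t
  have := sq_abs u
  nlinarith [abs_nonneg t, abs_nonneg u]

include hs in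
lemma psi_lt_above
    (hρ : ∀ x y : ℝ, (x, y) ∈ slitP → nrm (x, y) < ρ₀ →
      (1 / (2 * Real.pi)) * (Real.log (nrm (x, y)) + 1) + pd₂ s (x, y) < 0)
    {x y : ℝ} (hx : 0 ≤ x) (hy : 0 < y) (hnrm : nrm (x, y) < ρ₀) :
    ψ s (x, y) < s (x, 0) := by
  have hseg : ∀ t₁ t₂ : ℝ, 0 < t₁ → t₁ < t₂ → t₂ ≤ y → ψ s (x, t₂) < ψ s (x, t₁) := by
    intro t₁ t₂ h1 h12 h2y
    apply psi_segment_lt hs hρ h12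
    intro t ht
    have ht1 : 0 < t := lt_of_lt_of_le h1 ht.1
    refine ⟨mem_slitP_iff.2 (Or.inr ht1.ne'), ?_⟩
    have : nrm (x, t) ≤ nrm (x, y) := nrm_mono_snd (by
      rw [abs_of_pos ht1, abs_of_pos hy]; linarith [ht.2])
    linarith
  have hstep : ψ s (x, y) < ψ s (x, y / 2) := hseg (y / 2) y (by linarith) (by linarith) le_rfl
  have hbound : ψ s (x, y / 2) ≤ s (x, 0) := by
    apply ge_of_tendsto (tendsto_psi_above hs hx)
    filter_upwards [Ioo_mem_nhdsGT_of_mem (Set.left_mem_Ico.2 (by linarith : (0:ℝ) < y / 2))]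
      with t ht
    exact (hseg t (y / 2) ht.1 ht.2 (by linarith)).le
  linarith

include hs in
lemma psi_gt_below
    (hρ : ∀ x y : ℝ, (x, y) ∈ slitP → nrm (x, y) < ρ₀ →
      (1 / (2 * Real.pi)) * (Real.log (nrm (x, y)) + 1) + pd₂ s (x, y) < 0)
    {x y : ℝ} (hx : 0 ≤ x) (hy : y < 0) (hnrm : nrm (x, y) < ρ₀) :
    x + s (x, 0) < ψ s (x, y) := by
  have hseg : ∀ t₁ t₂ : ℝ, y ≤ t₁ → t₁ < t₂ → t₂ < 0 → ψ s (x, t₂) < ψ s (x, t₁) := by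
    intro t₁ t₂ h1 h12 h2y
    apply psi_segment_lt hs hρ h12
    intro t ht
    have ht1 : t < 0 := lt_of_le_of_lt ht.2 h2y
    refine ⟨mem_slitP_iff.2 (Or.inr ht1.ne), ?_⟩
    have : nrm (x, t) ≤ nrm (x, y) := nrm_mono_snd (by
      rw [abs_of_neg ht1, abs_of_neg hy]; linarith [ht.1])
    linarith
  have hstep : ψ s (x, y / 2) < ψ s (x, y) := hseg y (y / 2) le_rfl (by linarith) (by linarith)
  have hbound : x + s (x, 0) ≤ ψ s (x, y / 2) := by
    apply le_of_tendsto (tendsto_psi_below hs hx)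
    filter_upwards [Ioo_mem_nhdsLT_of_mem (Set.right_mem_Ioc.2 (by linarith : y / 2 < 0))]
      with t ht
    exact (hseg (y / 2) t (by linarith) ht.1 ht.2).le
  linarith

include hs in
lemma injOn_PsiM
    (hρ : ∀ x y : ℝ, (x, y) ∈ slitP → nrm (x, y) < ρ₀ →
      (1 / (2 * Real.pi)) * (Real.log (nrm (x, y)) + 1) + pd₂ s (x, y) < 0)
    {ρ₁ ρ₂ : ℝ} (hρ₂ : ρ₂ ≤ ρ₀) :
    Set.InjOn (ΨM s) {H ∈ slitP | ρ₁ < nrm H ∧ nrm H < ρ₂} := by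
  have key : ∀ x y₁ y₂ : ℝ, y₁ < y₂ →
      (x, y₁) ∈ ({H ∈ slitP | ρ₁ < nrm H ∧ nrm H < ρ₂} : Set (ℝ × ℝ)) →
      (x, y₂) ∈ ({H ∈ slitP | ρ₁ < nrm H ∧ nrm H < ρ₂} : Set (ℝ × ℝ)) →
      ψ s (x, y₁) ≠ ψ s (x, y₂) := by
    intro x y₁ y₂ h12 hm1 hm2
    obtain ⟨hs1, _, hn1⟩ := hm1
    obtain ⟨hs2, _, hn2⟩ := hm2
    have hn1' : nrm (x, y₁) < ρ₀ := lt_of_lt_of_le hn1 hρ₂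
    have hn2' : nrm (x, y₂) < ρ₀ := lt_of_lt_of_le hn2 hρ₂
    have hsegcase : ∀ hseg : (∀ t ∈ Set.Icc y₁ y₂, (x, t) ∈ slitP),
        ψ s (x, y₁) ≠ ψ s (x, y₂) := by
      intro hseg
      have : ψ s (x, y₂) < ψ s (x, y₁) := by
        apply psi_segment_lt hs hρ h12
        intro t ht
        refine ⟨hseg t ht, ?_⟩
        have := nrm_le_max (x := x) ht.1 ht.2
        rcases max_cases (nrm (x, y₁)) (nrm (x, y₂)) with ⟨he, _⟩ | ⟨he, _⟩ <;>
          rw [he] at this <;> linarith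
      exact fun h => absurd h.symm this.ne
    rcases lt_or_ge x 0 with hx | hx
    · exact hsegcase (fun t _ => mem_slitP_iff.2 (Or.inl hx))
    · have hy1 : y₁ ≠ 0 := by
        intro h; rw [mem_slitP_iff] at hs1; simp [h] at hs1; linarith
      have hy2 : y₂ ≠ 0 := by
        intro h; rw [mem_slitP_iff] at hs2; simp [h] at hs2; linarith
      rcases lt_or_ge 0 y₁ with hy1p | hy1n
      · exact hsegcase (fun t ht => mem_slitP_iff.2 (Or.inr (by
          have : 0 < t := lt_of_lt_of_le hy1p ht.1; exact this.ne')))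
      · have hy1' : y₁ < 0 := lt_of_le_of_ne hy1n hy1
        rcases lt_or_ge y₂ 0 with hy2n | hy2p
        · exact hsegcase (fun t ht => mem_slitP_iff.2 (Or.inr (by
            have : t < 0 := lt_of_le_of_lt ht.2 hy2n; exact this.ne)))
        · have hy2' : 0 < y₂ := lt_of_le_of_ne hy2p (Ne.symm hy2)
          have h1 := psi_gt_below hs hρ hx hy1' hn1'
          have h2 := psi_lt_above hs hρ hx hy2' hn2'
          have : ψ s (x, y₂) < ψ s (x, y₁) := by linarith
          exact fun h => absurd h.symm this.ne
  intro H hH K hK heq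
  simp only [ΨM, Prod.mk.injEq] at heq
  obtain ⟨hx, hψ⟩ := heq
  have hH' : H = (H.1, H.2) := rfl
  have hK' : K = (H.1, K.2) := by rw [hx]
  rcases lt_trichotomy H.2 K.2 with h | h | h
  · exfalso
    refine key H.1 H.2 K.2 h ?_ ?_ ?_
    · rw [← hH']; exact hH
    · rw [← hK']; exact hK
    · rw [← hH', ← hK']; exact hψ
  · rw [hH', hK', h]
  · exfalso
    refine key H.1 K.2 H.2 h ?_ ?_ ?_
    · rw [← hK']; exact hK
    · rw [← hH']; exact hH
    · rw [← hK', ← hH']; exact hψ.symm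


/-- The local analytic-inverse package at a point of the slit annulus. -/
lemma local_package (hs : ∀ x, AnalyticAt ℝ s x)
    (hρ : ∀ x y : ℝ, (x, y) ∈ slitP → nrm (x, y) < ρ₀ →
      (1 / (2 * Real.pi)) * (Real.log (nrm (x, y)) + 1) + pd₂ s (x, y) < 0)
    {H₀ : ℝ × ℝ} (hsl : H₀ ∈ slitP) (hnrm : nrm H₀ < ρ₀) :
    ∃ PH : OpenPartialHomeomorph (ℝ × ℝ) (ℝ × ℝ), (PH : (ℝ × ℝ) → (ℝ × ℝ)) = ΨM s ∧
      H₀ ∈ PH.source ∧ AnalyticAt ℝ PH.symm (ΨM s H₀) := by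
  obtain ⟨x, y⟩ := H₀
  have hψa : AnalyticAt ℝ (ψ s) (x, y) := psi_analyticAt s hs hsl
  set L := fderiv ℝ (ψ s) (x, y) with hLdef
  set b := (1 / (2 * Real.pi)) * (Real.log (nrm (x, y)) + 1) + pd₂ s (x, y) with hbdef
  have hbneg : b < 0 := hρ x y hsl hnrm
  have hb : b ≠ 0 := hbneg.ne
  have hd := hasDerivAt_psi s hs hsl
  have hline : HasDerivAt (fun t : ℝ => ((x, t) : ℝ × ℝ)) ((0 : ℝ), (1 : ℝ)) y :=
    (hasDerivAt_const y x).prodMk (hasDerivAt_id y)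
  have hcomp : HasDerivAt (fun t => ψ s (x, t)) (L (0, 1)) y :=
    (hψa.differentiableAt.hasFDerivAt).comp_hasDerivAt y hline
  have hL1 : L (0, 1) = b := hcomp.unique hd
  set a := L (1, 0) with hadef
  have Lrep : ∀ u v : ℝ, L (u, v) = u * a + v * b := by
    intro u v
    have h1 : ((u, v) : ℝ × ℝ) = u • ((1 : ℝ), (0 : ℝ)) + v • ((0 : ℝ), (1 : ℝ)) := by
      simp [Prod.smul_mk]
    rw [h1, map_add, _root_.map_smul, _root_.map_smul, hL1]
    simp [smul_eq_mul, hadef]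
  set f' : (ℝ × ℝ) →L[ℝ] (ℝ × ℝ) := (ContinuousLinearMap.fst ℝ ℝ ℝ).prod L with hf'def
  set g' : (ℝ × ℝ) →L[ℝ] (ℝ × ℝ) := (ContinuousLinearMap.fst ℝ ℝ ℝ).prod
    (b⁻¹ • (ContinuousLinearMap.snd ℝ ℝ ℝ - a • ContinuousLinearMap.fst ℝ ℝ ℝ)) with hg'def
  have h₁ : Function.LeftInverse g' f' := by
    rintro ⟨u, v⟩
    simp only [hf'def, hg'def, ContinuousLinearMap.prod_apply, ContinuousLinearMap.coe_fst',
      ContinuousLinearMap.smul_apply, ContinuousLinearMap.sub_apply,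
      ContinuousLinearMap.coe_snd', Lrep, smul_eq_mul]
    refine Prod.ext rfl ?_
    show b⁻¹ * (u * a + v * b - a * u) = v
    field_simp
    ring
  have h₂ : Function.RightInverse g' f' := by
    rintro ⟨u, v⟩
    simp only [hf'def, hg'def, ContinuousLinearMap.prod_apply, ContinuousLinearMap.coe_fst',
      ContinuousLinearMap.smul_apply, ContinuousLinearMap.sub_apply,
      ContinuousLinearMap.coe_snd', Lrep, smul_eq_mul]
    refine Prod.ext rfl ?_
    show u * a + b⁻¹ * (v - a * u) * b = v
    field_simp
    ring
  set e : (ℝ × ℝ) ≃L[ℝ] (ℝ × ℝ) := ContinuousLinearEquiv.equivOfInverse f' g' h₁ h₂ with hedef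
  have hcoe : (e : (ℝ × ℝ) →L[ℝ] (ℝ × ℝ)) = f' := rfl
  have hstrictψ : HasStrictFDerivAt (ψ s) L (x, y) := hψa.hasStrictFDerivAt
  have hstrict : HasStrictFDerivAt (ΨM s) (e : (ℝ × ℝ) →L[ℝ] (ℝ × ℝ)) (x, y) := by
    rw [hcoe, hf'def]
    exact hasStrictFDerivAt_fst.prodMk hstrictψ
  set PH := hstrict.toOpenPartialHomeomorph (ΨM s) with hPHdef
  have hPHcoe : (PH : (ℝ × ℝ) → (ℝ × ℝ)) = ΨM s := hstrict.toOpenPartialHomeomorph_coe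
  have hsource : (x, y) ∈ PH.source := hstrict.mem_toOpenPartialHomeomorph_source
  -- power series of ΨM at (x,y)
  have hΨa : AnalyticAt ℝ (ΨM s) (x, y) := by
    have := analyticAt_fst.prod hψa
    exact this
  obtain ⟨p, hp⟩ := hΨa
  have hfd : fderiv ℝ (ΨM s) (x, y) = (e : (ℝ × ℝ) →L[ℝ] (ℝ × ℝ)) :=
    hstrict.hasFDerivAt.fderiv
  have hp1 : p 1 = (continuousMultilinearCurryFin1 ℝ (ℝ × ℝ) (ℝ × ℝ)).symm
      (e : (ℝ × ℝ) →L[ℝ] (ℝ × ℝ)) := by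
    have h5 := hp.fderiv_eq
    rw [hfd] at h5
    rw [h5]
    simp
  have hpPH : HasFPowerSeriesAt (PH : (ℝ × ℝ) → (ℝ × ℝ)) p (x, y) := by rw [hPHcoe]; exact hp
  have hsymm := PH.hasFPowerSeriesAt_symm hsource hpPH hp1
  refine ⟨PH, hPHcoe, hsource, ?_⟩
  have : PH (x, y) = ΨM s (x, y) := by rw [hPHcoe]
  rw [← this]
  exact ⟨_, hsymm⟩


/-- If `s` is real analytic, then on every small enough slit annulus `V_*` the image
`A = Ψ(V_*)` is open and `Ψ : V_* → A` is a homeomorphism onto `A` whose inverse map is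
real analytic. -/
theorem stmt3 (s : ℝ × ℝ → ℝ) (hs : ∀ x, AnalyticAt ℝ s x) :
    ∃ ρ₀ > 0, ∀ ρ₁ ρ₂ : ℝ, 0 < ρ₁ → ρ₁ < ρ₂ → ρ₂ ≤ ρ₀ →
      IsOpen (ΨM s '' {H ∈ slitP | ρ₁ < nrm H ∧ nrm H < ρ₂}) ∧
      ContinuousOn (ΨM s) {H ∈ slitP | ρ₁ < nrm H ∧ nrm H < ρ₂} ∧
      ∃ g : ℝ × ℝ → ℝ × ℝ,
        Set.InvOn g (ΨM s) {H ∈ slitP | ρ₁ < nrm H ∧ nrm H < ρ₂}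
          (ΨM s '' {H ∈ slitP | ρ₁ < nrm H ∧ nrm H < ρ₂}) ∧
        Set.MapsTo g (ΨM s '' {H ∈ slitP | ρ₁ < nrm H ∧ nrm H < ρ₂})
          {H ∈ slitP | ρ₁ < nrm H ∧ nrm H < ρ₂} ∧
        ∀ a ∈ ΨM s '' {H ∈ slitP | ρ₁ < nrm H ∧ nrm H < ρ₂}, AnalyticAt ℝ g a := by
  obtain ⟨ρ₀, hρ0pos, hρ0le1, hρ⟩ := exists_rho0 s hs
  refine ⟨ρ₀, hρ0pos, ?_⟩
  intro ρ₁ ρ₂ hρ₁pos h12 h2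
  set V : Set (ℝ × ℝ) := {H ∈ slitP | ρ₁ < nrm H ∧ nrm H < ρ₂} with hVdef
  have hVmem : ∀ H ∈ V, H ∈ slitP ∧ nrm H < ρ₀ := fun H hH =>
    ⟨hH.1, lt_of_lt_of_le hH.2.2 h2⟩
  have hVopen : IsOpen V := by
    have hnrmc : Continuous nrm := Real.continuous_sqrt.comp (by fun_prop)
    have : V = slitP ∩ (nrm ⁻¹' (Set.Ioo ρ₁ ρ₂)) := rfl
    rw [this]
    exact isOpen_slitP.inter (isOpen_Ioo.preimage hnrmc)
  have hcont : ContinuousOn (ΨM s) V := by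
    intro H hH
    exact (analyticAt_fst.prod (psi_analyticAt s hs hH.1)).continuousAt.continuousWithinAt
  have hinj : Set.InjOn (ΨM s) V := injOn_PsiM hs hρ h2
  set g : ℝ × ℝ → ℝ × ℝ := Function.invFunOn (ΨM s) V with hgdef
  -- local packages
  have hloc : ∀ a ∈ ΨM s '' V, ∃ W : Set (ℝ × ℝ), IsOpen W ∧ a ∈ W ∧ W ⊆ ΨM s '' V ∧
      AnalyticAt ℝ g a := by
    rintro a ⟨H₀, hH₀, rfl⟩
    obtain ⟨PH, hPHcoe, hsrc, hsymm⟩ :=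
      local_package hs hρ (hVmem H₀ hH₀).1 (hVmem H₀ hH₀).2
    refine ⟨ΨM s '' (V ∩ PH.source), ?_, ⟨H₀, ⟨hH₀, hsrc⟩, rfl⟩,
      Set.image_mono Set.inter_subset_left, ?_⟩
    · have : ΨM s '' (V ∩ PH.source) = (PH : (ℝ × ℝ) → (ℝ × ℝ)) '' (V ∩ PH.source) := by
        rw [hPHcoe]
      rw [this]
      exact PH.isOpen_image_of_subset_source (hVopen.inter PH.open_source)
        Set.inter_subset_right
    · apply hsymm.congr
      have hWopen : IsOpen (ΨM s '' (V ∩ PH.source)) := by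
        have : ΨM s '' (V ∩ PH.source) = (PH : (ℝ × ℝ) → (ℝ × ℝ)) '' (V ∩ PH.source) := by
          rw [hPHcoe]
        rw [this]
        exact PH.isOpen_image_of_subset_source (hVopen.inter PH.open_source)
          Set.inter_subset_right
      filter_upwards [hWopen.mem_nhds ⟨H₀, ⟨hH₀, hsrc⟩, rfl⟩]
      rintro y ⟨K, ⟨hKV, hKsrc⟩, rfl⟩
      have h1 : PH.symm (ΨM s K) = K := by
        have : ΨM s K = PH K := by rw [hPHcoe]
        rw [this]
        exact PH.left_inv hKsrc
      have h2 : g (ΨM s K) = K := hinj.leftInvOn_invFunOn hKV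
      rw [h1, h2]
  refine ⟨?_, hcont, g, ⟨hinj.leftInvOn_invFunOn, ?_⟩, ?_, ?_⟩
  · rw [isOpen_iff_forall_mem_open]
    intro a ha
    obtain ⟨W, hWo, haW, hWsub, _⟩ := hloc a ha
    exact ⟨W, hWsub, hWo, haW⟩
  · rintro y ⟨H, hH, rfl⟩
    exact Function.invFunOn_eq ⟨H, hH, rfl⟩
  · rintro y ⟨H, hH, rfl⟩
    exact Function.invFunOn_mem ⟨H, hH, rfl⟩
  · intro a ha
    obtain ⟨W, hWo, haW, hWsub, hga⟩ := hloc a ha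
    exact hga
end
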